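/- (Recursive lower bound for the barrier chain.) Let n ≥ 1, let c₁, …, cₙ be positive reals, and set c̄ = max{c₁,…,cₙ} and c̲ = min{c₁,…,cₙ}. Let h₁, …, hₙ : [t₀, t₀+T_pre) → ℝ be differentiable, satisfying the recursion h_{i+1}(t) = h_i'(t) + c_i·φ(t)·h_i(t) for all i = 1,…,n−1 and all t ∈ [t₀, t₀+T_pre), and suppose hₙ'(t) + cₙ·φ(t)·hₙ(t) ≥ 0 for all t ∈ [t₀, t₀+T_pre). For each j define c_j* = c̄ if h_j(t₀) > 0 and c_j* = c̲ otherwise. Then for every i ∈ {1,…,n} and every t ∈ [t₀, t₀+T_pre): h_i(t) ≥ Σ_{j=i}^{n} h_j(t₀)·((t−t₀)^{j−i}/(j−i)!)·exp(−c_j* ∫_{t₀}^{t} φ(s) ds). -/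

import Mathlib

noncomputable def blowup (t₀ Tpre α : ℝ) (t : ℝ) : ℝ :=
  (Tpre ^ 2 + α * ((t - t₀) ^ 2 - (t - t₀) * Tpre) ^ 2) / (Tpre + t₀ - t) ^ 2

/-!
Write `S i` for the right-hand side and `Φ` for the integral of `φ`. Differentiating,
`S i' + c i φ S i = S (i+1) + φ ∑ⱼ (c i - c*ⱼ) hⱼ(t₀) (t-t₀)^(j-i)/(j-i)! exp(-c*ⱼ Φ)`, and every
summand of the last sum is `≤ 0` because `c*ⱼ` was chosen as the extreme value on the side of the
sign of `hⱼ(t₀)`. Hence `g = h i - S i` vanishes at `t₀` and satisfies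
`g' + c i φ g ≥ h (i+1) - S (i+1)` (for `i = n` the right side is replaced by
`h' n + c n φ h n ≥ 0`), so the integrating factor `exp (c i Φ)` makes `g` nonnegative by downward
induction on `i`.
-/
open Finset

theorem nonneg_of_hasDerivAt_add_mul_nonneg {g g' P p : ℝ → ℝ} {a b : ℝ}
    (hg : ∀ x ∈ Set.Ico a b, HasDerivAt g (g' x) x) (hP : ∀ x ∈ Set.Ico a b, HasDerivAt P (p x) x)
    (hineq : ∀ x ∈ Set.Ico a b, 0 ≤ g' x + p x * g x) (ha : 0 ≤ g a) :
    ∀ x ∈ Set.Ico a b, 0 ≤ g x := by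
  intro x hx
  have hF : ∀ y ∈ Set.Ico a b, HasDerivAt (fun t => g t * Real.exp (P t))
      ((g' y + p y * g y) * Real.exp (P y)) y := fun y hy =>
    ((hg y hy).mul (hP y hy).exp).congr_deriv (by ring)
  have hmono : MonotoneOn (fun t => g t * Real.exp (P t)) (Set.Ico a b) := by
    refine monotoneOn_of_hasDerivWithinAt_nonneg (convex_Ico a b)
      (fun y hy => (hF y hy).continuousAt.continuousWithinAt)
      (fun y hy => (hF y (interior_subset hy)).hasDerivWithinAt)
      (fun y hy => mul_nonneg (hineq y (interior_subset hy)) (Real.exp_pos _).le)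
  have hax : g a * Real.exp (P a) ≤ g x * Real.exp (P x) :=
    hmono (Set.left_mem_Ico.mpr (hx.1.trans_lt hx.2)) hx hx.1
  exact nonneg_of_mul_nonneg_left ((mul_nonneg ha (Real.exp_pos _).le).trans hax) (Real.exp_pos _)

theorem hasDerivAt_integral_of_continuousOn {f : ℝ → ℝ} {U : Set ℝ} {a x : ℝ}
    (hU : IsOpen U) (hf : ContinuousOn f U) (hx : Set.uIcc a x ⊆ U) :
    HasDerivAt (fun t => ∫ s in a..t, f s) (f x) x :=
  intervalIntegral.integral_hasDerivAt_right ((hf.mono hx).intervalIntegrable)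
    (hf.stronglyMeasurableAtFilter hU x (hx Set.right_mem_uIcc))
    (hf.continuousAt (hU.mem_nhds (hx Set.right_mem_uIcc)))

theorem blowup_nonneg {t₀ Tpre α : ℝ} (hα : 0 ≤ α) (t : ℝ) : 0 ≤ blowup t₀ Tpre α t := by
  unfold blowup; positivity

theorem continuousOn_blowup (t₀ Tpre α : ℝ) :
    ContinuousOn (blowup t₀ Tpre α) (Set.Iio (t₀ + Tpre)) := by
  refine ContinuousOn.div (by fun_prop) (by fun_prop) fun t ht => ?_
  have : t < t₀ + Tpre := ht
  exact pow_ne_zero _ (by linarith)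

theorem hasDerivAt_integral_blowup {t₀ Tpre α x : ℝ} (hx : x ∈ Set.Ico t₀ (t₀ + Tpre)) :
    HasDerivAt (fun t => ∫ s in t₀..t, blowup t₀ Tpre α s) (blowup t₀ Tpre α x) x := by
  refine hasDerivAt_integral_of_continuousOn isOpen_Iio (continuousOn_blowup t₀ Tpre α) ?_
  rw [Set.uIcc_of_le hx.1]
  exact fun y hy => hy.2.trans_lt hx.2

theorem hasDerivAt_sub_pow_succ_div_factorial (t₀ x : ℝ) (m : ℕ) :
    HasDerivAt (fun t => (t - t₀) ^ (m + 1) / ((m + 1).factorial : ℝ))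
      ((x - t₀) ^ m / (m.factorial : ℝ)) x := by
  refine ((((hasDerivAt_id x).sub_const t₀).pow (m + 1)).div_const _).congr_deriv ?_
  rw [Nat.factorial_succ]; push_cast
  field_simp
  simp

noncomputable def lowerBarrier (a κ : ℕ → ℝ) (Φ : ℝ → ℝ) (t₀ : ℝ) (n i : ℕ) (t : ℝ) : ℝ :=
  ∑ j ∈ Icc i n, a j * ((t - t₀) ^ (j - i) / (Nat.factorial (j - i) : ℝ)) *
    Real.exp (-κ j * Φ t)

section lowerBarrier

variable {a κ : ℕ → ℝ} {Φ : ℝ → ℝ} {t₀ : ℝ} {n : ℕ}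

theorem hasDerivAt_barrierTerm (a κ : ℝ) (i j : ℕ) {p x : ℝ} (hΦ : HasDerivAt Φ p x) :
    HasDerivAt (fun t => a * ((t - t₀) ^ (j - i) / (Nat.factorial (j - i) : ℝ)) *
        Real.exp (-κ * Φ t))
      ((if i < j then a * ((x - t₀) ^ (j - (i + 1)) / (Nat.factorial (j - (i + 1)) : ℝ)) *
          Real.exp (-κ * Φ x) else 0) -
        p * (κ * a * ((x - t₀) ^ (j - i) / (Nat.factorial (j - i) : ℝ)) *
          Real.exp (-κ * Φ x))) x := by
  have hexp := (hΦ.const_mul (-κ)).exp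
  split_ifs with hij
  · have hpoly := (hasDerivAt_sub_pow_succ_div_factorial t₀ x (j - (i + 1))).const_mul a
    rw [show j - (i + 1) + 1 = j - i by omega] at hpoly
    exact (hpoly.mul hexp).congr_deriv (by ring)
  · rw [show j - i = 0 by omega]
    simp only [pow_zero, Nat.factorial_zero, Nat.cast_one, div_one, mul_one]
    exact (hexp.const_mul a).congr_deriv (by ring)

theorem hasDerivAt_lowerBarrier (i : ℕ) {p x : ℝ} (hΦ : HasDerivAt Φ p x) :
    HasDerivAt (lowerBarrier a κ Φ t₀ n i)
      (lowerBarrier a κ Φ t₀ n (i + 1) x - p * lowerBarrier (fun j => κ j * a j) κ Φ t₀ n i x)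
      x := by
  refine (HasDerivAt.fun_sum fun j _ => hasDerivAt_barrierTerm (a j) (κ j) i j hΦ).congr_deriv ?_
  rw [Finset.sum_sub_distrib, ← Finset.mul_sum, ← Finset.sum_filter]
  congr 2
  ext j; simp only [mem_filter, mem_Icc]; omega

theorem mul_lowerBarrier_sub (c : ℝ) (i : ℕ) (x : ℝ) :
    c * lowerBarrier a κ Φ t₀ n i x - lowerBarrier (fun j => κ j * a j) κ Φ t₀ n i x =
      lowerBarrier (fun j => (c - κ j) * a j) κ Φ t₀ n i x := by
  simp only [lowerBarrier, Finset.mul_sum, ← Finset.sum_sub_distrib]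
  exact Finset.sum_congr rfl fun j _ => by ring

theorem lowerBarrier_nonpos {i : ℕ} {x : ℝ} (ha : ∀ j ∈ Icc i n, a j ≤ 0) (hx : t₀ ≤ x) :
    lowerBarrier a κ Φ t₀ n i x ≤ 0 :=
  Finset.sum_nonpos fun j hj =>
    mul_nonpos_of_nonpos_of_nonneg
      (mul_nonpos_of_nonpos_of_nonneg (ha j hj) (by have := sub_nonneg.2 hx; positivity))
      (Real.exp_pos _).le

theorem lowerBarrier_start {i : ℕ} (hΦ : Φ t₀ = 0) (hi : i ≤ n) :
    lowerBarrier a κ Φ t₀ n i t₀ = a i := by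
  rw [lowerBarrier, Finset.sum_eq_single_of_mem i (mem_Icc.2 ⟨le_rfl, hi⟩)]
  · simp [hΦ]
  · intro j hj hji
    rw [sub_self, zero_pow (by grind), zero_div, mul_zero, zero_mul]

theorem lowerBarrier_succ_self (x : ℝ) : lowerBarrier a κ Φ t₀ n (n + 1) x = 0 := by
  simp [lowerBarrier]

theorem lowerBarrier_le_of_hasDerivAt {p f f' : ℝ → ℝ} {b c : ℝ} {i : ℕ}
    (hΦ : ∀ x ∈ Set.Ico t₀ b, HasDerivAt Φ (p x) x) (hp : ∀ x ∈ Set.Ico t₀ b, 0 ≤ p x)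
    (hΦ₀ : Φ t₀ = 0) (hi : i ≤ n) (hκ : ∀ j ∈ Icc i n, (c - κ j) * a j ≤ 0)
    (hf : ∀ x ∈ Set.Ico t₀ b, HasDerivAt f (f' x) x) (hf₀ : f t₀ = a i)
    (hnext : ∀ x ∈ Set.Ico t₀ b, lowerBarrier a κ Φ t₀ n (i + 1) x ≤ f' x + c * p x * f x) :
    ∀ x ∈ Set.Ico t₀ b, lowerBarrier a κ Φ t₀ n i x ≤ f x := by
  refine fun x hx => sub_nonneg.1 <| nonneg_of_hasDerivAt_add_mul_nonneg
    (g := fun x => f x - lowerBarrier a κ Φ t₀ n i x) (P := fun x => c * Φ x)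
    (fun x hx => (hf x hx).sub (hasDerivAt_lowerBarrier i (hΦ x hx)))
    (fun x hx => (hΦ x hx).const_mul c) (fun x hx => ?_)
    (by simp [hf₀, lowerBarrier_start hΦ₀ hi]) x hx
  have hrest : p x * lowerBarrier (fun j => (c - κ j) * a j) κ Φ t₀ n i x ≤ 0 :=
    mul_nonpos_of_nonneg_of_nonpos (hp x hx) (lowerBarrier_nonpos hκ hx.1)
  rw [← mul_lowerBarrier_sub] at hrest
  linarith [hnext x hx]

end lowerBarrier

theorem mul_sub_ite_sup'_inf'_nonpos {ι : Type*} {s : Finset ι} (hs : s.Nonempty) (c : ι → ℝ)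
    {i : ι} (hi : i ∈ s) (y : ℝ) :
    (c i - if 0 < y then s.sup' hs c else s.inf' hs c) * y ≤ 0 := by
  split_ifs with hy
  · exact mul_nonpos_of_nonpos_of_nonneg (sub_nonpos.2 (le_sup' c hi)) hy.le
  · exact mul_nonpos_of_nonneg_of_nonpos (sub_nonneg.2 (inf'_le c hi)) (not_lt.1 hy)

theorem recursive_lower_bound_barrier_chain_general (t₀ Tpre α : ℝ) (hα : 0 ≤ α)
    (n : ℕ) (hn : 1 ≤ n) (c : ℕ → ℝ)
    (h h' : ℕ → ℝ → ℝ)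
    (hderiv : ∀ i ∈ Finset.Icc 1 n, ∀ t ∈ Set.Ico t₀ (t₀ + Tpre),
      HasDerivAt (h i) (h' i t) t)
    (hrec : ∀ i ∈ Finset.Icc 1 (n - 1), ∀ t ∈ Set.Ico t₀ (t₀ + Tpre),
      h (i + 1) t = h' i t + c i * blowup t₀ Tpre α t * h i t)
    (hlast : ∀ t ∈ Set.Ico t₀ (t₀ + Tpre),
      h' n t + c n * blowup t₀ Tpre α t * h n t ≥ 0) :
    ∀ i ∈ Finset.Icc 1 n, ∀ t ∈ Set.Ico t₀ (t₀ + Tpre),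
      h i t ≥ ∑ j ∈ Finset.Icc i n,
        h j t₀ * ((t - t₀) ^ (j - i) / (Nat.factorial (j - i) : ℝ)) *
          Real.exp (-(if 0 < h j t₀
              then ((Finset.Icc 1 n).sup' (Finset.nonempty_Icc.mpr hn) c)
              else ((Finset.Icc 1 n).inf' (Finset.nonempty_Icc.mpr hn) c)) *
            ∫ s in t₀..t, blowup t₀ Tpre α s) := by
  set S := lowerBarrier (fun j => h j t₀)
    (fun j => if 0 < h j t₀ then (Icc 1 n).sup' (nonempty_Icc.mpr hn) c
      else (Icc 1 n).inf' (nonempty_Icc.mpr hn) c)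
    (fun t => ∫ s in t₀..t, blowup t₀ Tpre α s) t₀ n
  have step : ∀ i ∈ Icc 1 n,
      (∀ x ∈ Set.Ico t₀ (t₀ + Tpre), S (i + 1) x ≤ h' i x + c i * blowup t₀ Tpre α x * h i x) →
      ∀ t ∈ Set.Ico t₀ (t₀ + Tpre), S i t ≤ h i t := fun i hi =>
    lowerBarrier_le_of_hasDerivAt (fun x hx => hasDerivAt_integral_blowup hx)
      (fun x _ => blowup_nonneg hα x) intervalIntegral.integral_same (mem_Icc.1 hi).2
      (fun j _ => mul_sub_ite_sup'_inf'_nonpos _ c hi _) (hderiv i hi) rfl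
  intro i hi
  refine Nat.decreasingInduction
    (motive := fun m _ => 1 ≤ m → ∀ t ∈ Set.Ico t₀ (t₀ + Tpre), S m t ≤ h m t)
    (fun k hk ih hk₁ => step k (mem_Icc.2 ⟨hk₁, hk.le⟩) fun x hx =>
      (ih (by omega) x hx).trans_eq (hrec k (mem_Icc.2 ⟨hk₁, by omega⟩) x hx))
    (fun hn₁ => step n (mem_Icc.2 ⟨hn₁, le_rfl⟩) fun x hx =>
      (lowerBarrier_succ_self x).trans_le (hlast x hx))
    (mem_Icc.1 hi).2 (mem_Icc.1 hi).1

theorem recursive_lower_bound_barrier_chain (t₀ Tpre α : ℝ) (hT : 0 < Tpre) (hα : 0 ≤ α)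
    (n : ℕ) (hn : 1 ≤ n) (c : ℕ → ℝ)
    (hc : ∀ i ∈ Finset.Icc 1 n, 0 < c i)
    (h h' : ℕ → ℝ → ℝ)
    (hderiv : ∀ i ∈ Finset.Icc 1 n, ∀ t ∈ Set.Ico t₀ (t₀ + Tpre),
      HasDerivAt (h i) (h' i t) t)
    (hrec : ∀ i ∈ Finset.Icc 1 (n - 1), ∀ t ∈ Set.Ico t₀ (t₀ + Tpre),
      h (i + 1) t = h' i t + c i * blowup t₀ Tpre α t * h i t)
    (hlast : ∀ t ∈ Set.Ico t₀ (t₀ + Tpre),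
      h' n t + c n * blowup t₀ Tpre α t * h n t ≥ 0) :
    ∀ i ∈ Finset.Icc 1 n, ∀ t ∈ Set.Ico t₀ (t₀ + Tpre),
      h i t ≥ ∑ j ∈ Finset.Icc i n,
        h j t₀ * ((t - t₀) ^ (j - i) / (Nat.factorial (j - i) : ℝ)) *
          Real.exp (-(if 0 < h j t₀
              then ((Finset.Icc 1 n).sup' (Finset.nonempty_Icc.mpr hn) c)
              else ((Finset.Icc 1 n).inf' (Finset.nonempty_Icc.mpr hn) c)) *
            ∫ s in t₀..t, blowup t₀ Tpre α s) :=
  recursive_lower_bound_barrier_chain_general t₀ Tpre α hα n hn c h h' hderiv hrec hlast
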